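/- Let d ≥ 1, let C : ℝ^d → ℝ be continuous with 0 < C(0) and |C(x)| ≤ C(0) for all x, and let ℓ_C > 0 be such that C(x) > 0 whenever |x|_∞ ≤ ℓ_C/2. Then the Wegner constant W(E) satisfies lim_{E → −∞} (ln W(E))/E² = −1/(2 C(0)). -/

import Mathlib

open MeasureTheory Real

/-- The length `ℓ_E := min{|E|^{-1/2}, ℓ_C}`. -/
noncomputable def ellE (ℓC E : ℝ) : ℝ := min (|E| ^ (-(1 : ℝ) / 2)) ℓC

/-- `b_E := inf{C(x)/C(0) : |x|_∞ < ℓ_E/2}`. -/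
noncomputable def bE (d : ℕ) (C : (Fin d → ℝ) → ℝ) (ℓC E : ℝ) : ℝ :=
  sInf {r : ℝ | ∃ x : Fin d → ℝ, ‖x‖ < ellE ℓC E / 2 ∧ r = C x / C 0}

/-- `C_E := C(0)(2 - b_E²)`. -/
noncomputable def CE (d : ℕ) (C : (Fin d → ℝ) → ℝ) (ℓC E : ℝ) : ℝ :=
  C 0 * (2 - (bE d C ℓC E) ^ 2)

/-- `t_E := (2C_E)^{-1}(-E + √(E² + 2C_E/π))`. -/
noncomputable def tE (d : ℕ) (C : (Fin d → ℝ) → ℝ) (ℓC E : ℝ) : ℝ :=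
  (2 * CE d C ℓC E)⁻¹ * (-E + Real.sqrt (E ^ 2 + 2 * CE d C ℓC E / Real.pi))

/-- The Wegner constant
`W(E) := exp(t_E E + t_E² C_E/2)/(√(2π C(0)) b_E) · (2/ℓ_E + (2π t_E)^{-1/2})^d`. -/
noncomputable def wegnerW (d : ℕ) (C : (Fin d → ℝ) → ℝ) (ℓC E : ℝ) : ℝ :=
  Real.exp (tE d C ℓC E * E + (tE d C ℓC E) ^ 2 * CE d C ℓC E / 2) /
      (Real.sqrt (2 * Real.pi * C 0) * bE d C ℓC E) *
    (2 / ellE ℓC E + (2 * Real.pi * tE d C ℓC E) ^ (-(1 : ℝ) / 2)) ^ d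

/-!
As `E → -∞` we have `ℓ_E → 0`, so continuity of `C` at `0` gives `b_E → 1` and `C_E → C(0)`.
Hence `t_E ~ -E / C(0)`, and the exponent `t_E E + t_E² C_E / 2 ~ -E² / (2 C(0))` carries all of
the `E²`-growth: the prefactor `(√(2π C(0)) b_E)⁻¹` tends to a positive constant and the last
factor grows only like `√|E|`, so both have logarithms of order `o(E²)`.
-/

open Filter Topology

theorem tendsto_sInf_image_ball {X : Type*} [PseudoMetricSpace X] {g : X → ℝ} {x₀ : X}
    (hg : ContinuousAt g x₀) :
    Tendsto (fun r => sInf (g '' Metric.ball x₀ r)) (𝓝[>] 0) (𝓝 (g x₀)) := by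
  rw [Metric.tendsto_nhds]
  intro ε hε
  obtain ⟨δ, hδ, hgδ⟩ := Metric.continuousAt_iff.mp hg (ε / 2) (half_pos hε)
  filter_upwards [Ioo_mem_nhdsGT hδ] with r ⟨hr, hrδ⟩
  have hlower : ∀ y ∈ g '' Metric.ball x₀ r, g x₀ - ε / 2 ≤ y := by
    rintro _ ⟨x, hx, rfl⟩
    linarith [(abs_lt.mp (hgδ (hx.trans_le hrδ.le))).1]
  have hmem : g x₀ ∈ g '' Metric.ball x₀ r := ⟨x₀, Metric.mem_ball_self hr, rfl⟩
  have hge := le_csInf ⟨_, hmem⟩ hlower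
  have hle := csInf_le ⟨_, hlower⟩ hmem
  rw [Real.dist_eq, abs_lt]
  constructor <;> linarith

theorem tendsto_abs_rpow_neg_half_atBot :
    Tendsto (fun E : ℝ => |E| ^ (-(1 : ℝ) / 2)) atBot (𝓝 0) := by
  rw [neg_div]
  exact (tendsto_rpow_neg_atTop one_half_pos).comp tendsto_abs_atBot_atTop

theorem tendsto_sq_atBot : Tendsto (fun E : ℝ => E ^ 2) atBot atTop :=
  ((tendsto_pow_atTop two_ne_zero).comp tendsto_abs_atBot_atTop).congr fun E => sq_abs E

theorem tendsto_sqrt_sq_add_div_neg {a : ℝ → ℝ} {a₀ : ℝ} (ha : Tendsto a atBot (𝓝 a₀)) :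
    Tendsto (fun E => √(E ^ 2 + a E) / -E) atBot (𝓝 1) := by
  have h : Tendsto (fun E => √(1 + a E / E ^ 2)) atBot (𝓝 1) := by
    simpa using ((tendsto_const_nhds (x := (1 : ℝ))).add (ha.div_atTop tendsto_sq_atBot)).sqrt
  refine h.congr' ?_
  filter_upwards [eventually_lt_atBot 0] with E hE
  rw [one_add_div (pow_ne_zero 2 hE.ne), Real.sqrt_div' _ (sq_nonneg E), Real.sqrt_sq_eq_abs,
    abs_of_neg hE]

theorem tendsto_log_div_sq_atBot_of_le {f : ℝ → ℝ} {K : ℝ}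
    (hf : ∀ᶠ E in atBot, 1 ≤ f E ∧ f E ≤ K * -E) :
    Tendsto (fun E => Real.log (f E) / E ^ 2) atBot (𝓝 0) := by
  have hK : Tendsto (fun E : ℝ => K * -E / E ^ 2) atBot (𝓝 0) := by
    have h := tendsto_neg_atBot_atTop.inv_tendsto_atTop.const_mul K
    rw [mul_zero] at h
    refine h.congr' ?_
    filter_upwards [eventually_lt_atBot 0] with E hE
    simp only [Pi.inv_apply]
    field_simp
  refine squeeze_zero' ?_ ?_ hK
  · filter_upwards [hf] with E hE
    exact div_nonneg (Real.log_nonneg hE.1) (sq_nonneg E)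
  · filter_upwards [hf] with E hE
    gcongr
    exact (Real.log_le_self (by linarith)).trans hE.2

section Wegner

variable {d : ℕ} {C : (Fin d → ℝ) → ℝ} {ℓC : ℝ}

theorem ellE_pos (hℓC : 0 < ℓC) {E : ℝ} (hE : E ≠ 0) : 0 < ellE ℓC E :=
  lt_min (Real.rpow_pos_of_pos (abs_pos.mpr hE) _) hℓC

theorem ellE_eventuallyEq (hℓC : 0 < ℓC) :
    ellE ℓC =ᶠ[atBot] fun E => |E| ^ (-(1 : ℝ) / 2) := by
  filter_upwards [tendsto_abs_rpow_neg_half_atBot.eventually (eventually_le_nhds hℓC)] with E hE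
  exact min_eq_left hE

theorem tendsto_half_ellE_nhdsGT (hℓC : 0 < ℓC) :
    Tendsto (fun E => ellE ℓC E / 2) atBot (𝓝[>] 0) := by
  refine tendsto_nhdsWithin_iff.mpr ⟨?_, ?_⟩
  · simpa using (tendsto_abs_rpow_neg_half_atBot.congr' (ellE_eventuallyEq hℓC).symm).div_const 2
  · filter_upwards [eventually_lt_atBot 0] with E hE
    exact half_pos (ellE_pos hℓC hE.ne)

theorem bE_eq_sInf_image_ball (E : ℝ) :
    bE d C ℓC E = sInf ((fun x => C x / C 0) '' Metric.ball 0 (ellE ℓC E / 2)) := by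
  simp only [bE, Set.image, mem_ball_zero_iff, eq_comm]

theorem tendsto_bE (hC : ContinuousAt C 0) (hC0 : C 0 ≠ 0) (hℓC : 0 < ℓC) :
    Tendsto (bE d C ℓC) atBot (𝓝 1) := by
  have hratio : ContinuousAt (fun x => C x / C 0) 0 := hC.div_const _
  have h := (tendsto_sInf_image_ball hratio).comp (tendsto_half_ellE_nhdsGT hℓC)
  rw [div_self hC0] at h
  exact h.congr fun E => (bE_eq_sInf_image_ball E).symm

theorem tendsto_CE (hC : ContinuousAt C 0) (hC0 : C 0 ≠ 0) (hℓC : 0 < ℓC) :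
    Tendsto (CE d C ℓC) atBot (𝓝 (C 0)) := by
  have h := (tendsto_const_nhds (x := C 0)).mul
    ((tendsto_const_nhds (x := (2 : ℝ))).sub ((tendsto_bE hC hC0 hℓC).pow 2))
  rw [show C 0 * (2 - 1 ^ 2) = C 0 by ring] at h
  exact h

theorem tendsto_tE_div_neg (hC : ContinuousAt C 0) (hC0 : C 0 ≠ 0) (hℓC : 0 < ℓC) :
    Tendsto (fun E => tE d C ℓC E / -E) atBot (𝓝 (C 0)⁻¹) := by
  have hCE := tendsto_CE hC hC0 hℓC
  have hsqrt := tendsto_sqrt_sq_add_div_neg ((hCE.const_mul 2).div_const Real.pi)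
  have h := ((hCE.const_mul 2).inv₀ (mul_ne_zero two_ne_zero hC0)).mul
    (tendsto_const_nhds (x := (1 : ℝ)).add hsqrt)
  rw [show (2 * C 0)⁻¹ * (1 + 1) = (C 0)⁻¹ by field_simp; norm_num] at h
  refine h.congr' ?_
  filter_upwards [eventually_lt_atBot 0] with E hE
  simp only [tE, mul_div_assoc, add_div, div_self (neg_ne_zero.mpr hE.ne)]

theorem tendsto_exponent_div_sq (hC : ContinuousAt C 0) (hC0 : C 0 ≠ 0) (hℓC : 0 < ℓC) :
    Tendsto (fun E => (tE d C ℓC E * E + tE d C ℓC E ^ 2 * CE d C ℓC E / 2) / E ^ 2) atBot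
      (𝓝 (-1 / (2 * C 0))) := by
  have ht := tendsto_tE_div_neg hC hC0 hℓC
  have h := ht.neg.add (((ht.pow 2).mul (tendsto_CE hC hC0 hℓC)).div_const 2)
  rw [show -(C 0)⁻¹ + (C 0)⁻¹ ^ 2 * C 0 / 2 = -1 / (2 * C 0) by field_simp; ring] at h
  refine h.congr' ?_
  filter_upwards [eventually_lt_atBot 0] with E hE
  field_simp

theorem tendsto_tE_atTop (hC : ContinuousAt C 0) (hC0 : 0 < C 0) (hℓC : 0 < ℓC) :
    Tendsto (tE d C ℓC) atBot atTop := by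
  refine ((tendsto_tE_div_neg hC hC0.ne' hℓC).pos_mul_atTop (inv_pos.mpr hC0)
    tendsto_neg_atBot_atTop).congr' ?_
  filter_upwards [eventually_lt_atBot 0] with E hE
  exact div_mul_cancel₀ _ (neg_ne_zero.mpr hE.ne)

theorem wegner_factor_bounds (hC : ContinuousAt C 0) (hC0 : 0 < C 0) (hℓC : 0 < ℓC) :
    ∀ᶠ E in atBot, 1 ≤ 2 / ellE ℓC E + (2 * Real.pi * tE d C ℓC E) ^ (-(1 : ℝ) / 2) ∧
      2 / ellE ℓC E + (2 * Real.pi * tE d C ℓC E) ^ (-(1 : ℝ) / 2) ≤ 3 * -E := by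
  have htop := (tendsto_tE_atTop hC hC0 hℓC).const_mul_atTop (by positivity : 0 < 2 * Real.pi)
  filter_upwards [ellE_eventuallyEq hℓC, eventually_le_atBot (-1), htop.eventually_ge_atTop 1]
    with E hell hE ht
  have habs : 1 ≤ |E| := by rw [abs_of_neg (by linarith)]; linarith
  have h2ell : 2 / ellE ℓC E = 2 * |E| ^ (1 / 2 : ℝ) := by
    rw [hell, neg_div, Real.rpow_neg (abs_nonneg E), div_inv_eq_mul]
  have hsqrt_le : |E| ^ (1 / 2 : ℝ) ≤ -E :=
    (Real.rpow_le_self_of_one_le habs (by norm_num)).trans (abs_of_neg (by linarith)).le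
  have hsqrt_ge : 1 ≤ |E| ^ (1 / 2 : ℝ) := Real.one_le_rpow habs (by norm_num)
  have hrpow_nonneg : 0 ≤ (2 * Real.pi * tE d C ℓC E) ^ (-(1 : ℝ) / 2) :=
    Real.rpow_nonneg (by linarith) _
  have hrpow_le : (2 * Real.pi * tE d C ℓC E) ^ (-(1 : ℝ) / 2) ≤ 1 :=
    Real.rpow_le_one_of_one_le_of_nonpos ht (by norm_num)
  rw [h2ell]
  constructor <;> linarith

theorem log_wegnerW (hC0 : 0 < C 0) {E : ℝ} (hb : 0 < bE d C ℓC E)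
    (hB : 0 < 2 / ellE ℓC E + (2 * Real.pi * tE d C ℓC E) ^ (-(1 : ℝ) / 2)) :
    Real.log (wegnerW d C ℓC E) =
      (tE d C ℓC E * E + tE d C ℓC E ^ 2 * CE d C ℓC E / 2)
        - Real.log (√(2 * Real.pi * C 0) * bE d C ℓC E)
        + d * Real.log (2 / ellE ℓC E + (2 * Real.pi * tE d C ℓC E) ^ (-(1 : ℝ) / 2)) := by
  have hD : 0 < √(2 * Real.pi * C 0) * bE d C ℓC E := by positivity
  rw [wegnerW, Real.log_mul (div_pos (Real.exp_pos _) hD).ne' (pow_pos hB d).ne',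
    Real.log_div (Real.exp_pos _).ne' hD.ne', Real.log_exp, Real.log_pow]

end Wegner

theorem wegner_constant_low_energy_asymptotics_general
    (d : ℕ) (C : (Fin d → ℝ) → ℝ) (hC : Continuous C)
    (hC0pos : 0 < C 0)
    (ℓC : ℝ) (hℓC : 0 < ℓC) :
    Filter.Tendsto (fun E : ℝ => Real.log (wegnerW d C ℓC E) / E ^ 2)
      Filter.atBot (nhds (-1 / (2 * C 0))) := by
  have hb := tendsto_bE (d := d) hC.continuousAt hC0pos.ne' hℓC
  have hfactor := wegner_factor_bounds hC.continuousAt hC0pos hℓC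
  have hmid : Tendsto (fun E => Real.log (√(2 * Real.pi * C 0) * bE d C ℓC E) / E ^ 2) atBot
      (𝓝 0) := by
    refine ((tendsto_const_nhds.mul hb).log ?_).div_atTop tendsto_sq_atBot
    positivity
  have h := ((tendsto_exponent_div_sq hC.continuousAt hC0pos.ne' hℓC).sub hmid).add
    ((tendsto_log_div_sq_atBot_of_le hfactor).const_mul (d : ℝ))
  rw [sub_zero, mul_zero, add_zero] at h
  refine h.congr' ?_
  filter_upwards [hfactor, hb.eventually (lt_mem_nhds one_pos)] with E hB hbE
  rw [log_wegnerW hC0pos hbE (by linarith [hB.1])]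
  ring

/-- Low-energy asymptotics of the Wegner constant:
`lim_{E → -∞} ln W(E)/E² = -1/(2C(0))`. -/
theorem wegner_constant_low_energy_asymptotics
    (d : ℕ) (hd : 1 ≤ d) (C : (Fin d → ℝ) → ℝ) (hC : Continuous C)
    (hC0pos : 0 < C 0) (hCbd : ∀ x, |C x| ≤ C 0)
    (ℓC : ℝ) (hℓC : 0 < ℓC)
    (hCpos : ∀ x : Fin d → ℝ, ‖x‖ ≤ ℓC / 2 → 0 < C x) :
    Filter.Tendsto (fun E : ℝ => Real.log (wegnerW d C ℓC E) / E ^ 2)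
      Filter.atBot (nhds (-1 / (2 * C 0))) :=
  wegner_constant_low_energy_asymptotics_general d C hC hC0pos ℓC hℓC
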